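/- arXiv:2205.12550 — 2 statements merged into one kernel-verified Lean document; each statement's English description precedes it below -/
import Mathlib

section
/- Let f : ℝ^{d_x} → ℝ^{d_x} and h : ℝ^{d_x} → ℝ^{d_y} be continuous, let D be a real d_z × d_z matrix and F a real d_z × d_y matrix, and let A ⊆ ℝ^{d_x}. Suppose T : ℝ^{d_x} → ℝ^{d_z} is differentiable and satisfies the observer PDE: the derivative of T at x applied to f(x) equals D T(x) + F h(x), for every x ∈ A. Let x : [0, ∞) → ℝ^{d_x} be differentiable with ẋ(t) = f(x(t)) and x(t) ∈ A for all t ≥ 0, and let z : [0, ∞) → ℝ^{d_z} be differentiable with ż(t) = D z(t) + F h(x(t)) for all t ≥ 0. Then the error e(t) := z(t) − T(x(t)) satisfies the linear differential equation ė(t) = D e(t) for all t ≥ 0, and hence e(t) = exp(tD) e(0) for all t ≥ 0. -/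
/-!
Differentiating `z - T ∘ x` along the trajectory, the observer PDE cancels the forcing term
`F h(x)` exactly, so the error obeys the autonomous linear ODE `ė = D e`. Both `e` and
`t ↦ exp(tD) e(0)` solve it with the same initial value, and the right-hand side is Lipschitz,
so they coincide by uniqueness of solutions (Grönwall).
-/

theorem eqOn_Ici_of_hasDerivAt_of_lipschitzWith {E : Type*} [NormedAddCommGroup E]
    [NormedSpace ℝ E] {v : E → E} {K : NNReal} (hv : LipschitzWith K v) {f g : ℝ → E} {a : ℝ}
    (hf : ∀ t, a ≤ t → HasDerivAt f (v (f t)) t) (hg : ∀ t, a ≤ t → HasDerivAt g (v (g t)) t)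
    (ha : f a = g a) : Set.EqOn f g (Set.Ici a) := fun _ ht =>
  ODE_solution_unique (v := fun _ => v) (fun _ => hv)
    (HasDerivAt.continuousOn fun s hs => hf s hs.1)
    (fun s hs => (hf s hs.1).hasDerivWithinAt)
    (HasDerivAt.continuousOn fun s hs => hg s hs.1)
    (fun s hs => (hg s hs.1).hasDerivWithinAt) ha ⟨ht, le_rfl⟩

theorem hasDerivAt_sub_comp_of_fderiv_eq {X Z : Type*} [NormedAddCommGroup X]
    [NormedSpace ℝ X] [NormedAddCommGroup Z] [NormedSpace ℝ Z] {f : X → X} {b : X → Z}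
    {L : Z →ₗ[ℝ] Z} {T : X → Z} {x : ℝ → X} {z : ℝ → Z} {t : ℝ}
    (hT : DifferentiableAt ℝ T (x t)) (hPDE : fderiv ℝ T (x t) (f (x t)) = L (T (x t)) + b (x t))
    (hx : HasDerivAt x (f (x t)) t) (hz : HasDerivAt z (L (z t) + b (x t)) t) :
    HasDerivAt (fun s => z s - T (x s)) (L (z t - T (x t))) t := by
  have hTx : HasDerivAt (fun s => T (x s)) (L (T (x t)) + b (x t)) t :=
    hPDE ▸ hT.hasFDerivAt.comp_hasDerivAt t hx
  refine (hz.sub hTx).congr_deriv ?_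
  rw [map_sub]
  abel

namespace Matrix

theorem exists_lipschitzWith_mulVec {n : Type*} [Fintype n] (D : Matrix n n ℝ) :
    ∃ K, LipschitzWith K D.mulVec :=
  ⟨_, D.mulVecLin.toContinuousLinearMap.lipschitz⟩

variable {n : Type*} [Fintype n] [DecidableEq n]

open NormedSpace in
theorem hasDerivAt_exp_smul_mulVec (D : Matrix n n ℝ) (v : n → ℝ) (t : ℝ) :
    HasDerivAt (fun s : ℝ => exp (s • D) *ᵥ v) (D *ᵥ (exp (t • D) *ᵥ v)) t := by
  -- Matrices have no canonical Banach-algebra norm; any one will do, as the claim is norm-free.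
  let _ : NormedRing (Matrix n n ℝ) := Matrix.linftyOpNormedRing
  let _ : NormedAlgebra ℝ (Matrix n n ℝ) := Matrix.linftyOpNormedAlgebra
  let applyAt : Matrix n n ℝ →L[ℝ] n → ℝ :=
    ((LinearMap.applyₗ v).comp (Matrix.toLin' : _ ≃ₗ[ℝ] _).toLinearMap).toContinuousLinearMap
  rw [mulVec_mulVec]
  exact applyAt.hasFDerivAt.comp_hasDerivAt t (hasDerivAt_exp_smul_const' D t)

theorem eq_exp_smul_mulVec_of_hasDerivAt (D : Matrix n n ℝ) {e : ℝ → n → ℝ}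
    (he : ∀ t, 0 ≤ t → HasDerivAt e (D *ᵥ e t) t) {t : ℝ} (ht : 0 ≤ t) :
    e t = NormedSpace.exp (t • D) *ᵥ e 0 := by
  obtain ⟨K, hK⟩ := exists_lipschitzWith_mulVec D
  refine eqOn_Ici_of_hasDerivAt_of_lipschitzWith hK he
    (fun s _ => hasDerivAt_exp_smul_mulVec D (e 0) s) ?_ ht
  simp

end Matrix

theorem observer_error_linear_ode_general
    (dx dy dz : ℕ)
    (f : (Fin dx → ℝ) → Fin dx → ℝ) (h : (Fin dx → ℝ) → Fin dy → ℝ)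
    (D : Matrix (Fin dz) (Fin dz) ℝ) (F : Matrix (Fin dz) (Fin dy) ℝ)
    (A : Set (Fin dx → ℝ))
    (T : (Fin dx → ℝ) → Fin dz → ℝ) (hT : Differentiable ℝ T)
    (hPDE : ∀ x ∈ A, fderiv ℝ T x (f x) = D.mulVec (T x) + F.mulVec (h x))
    (x : ℝ → Fin dx → ℝ) (hx : ∀ t : ℝ, 0 ≤ t → HasDerivAt x (f (x t)) t)
    (hxA : ∀ t : ℝ, 0 ≤ t → x t ∈ A)
    (z : ℝ → Fin dz → ℝ)
    (hz : ∀ t : ℝ, 0 ≤ t → HasDerivAt z (D.mulVec (z t) + F.mulVec (h (x t))) t)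
    (e : ℝ → Fin dz → ℝ) (he : ∀ t, e t = z t - T (x t)) :
    (∀ t : ℝ, 0 ≤ t → HasDerivAt e (D.mulVec (e t)) t) ∧
    (∀ t : ℝ, 0 ≤ t → e t = (NormedSpace.exp (t • D)).mulVec (e 0)) := by
  have he_deriv : ∀ t : ℝ, 0 ≤ t → HasDerivAt e (D.mulVec (e t)) t := by
    intro t ht
    rw [funext he]
    exact hasDerivAt_sub_comp_of_fderiv_eq (L := D.mulVecLin) (b := fun y => F.mulVec (h y))
      (hT (x t)) (hPDE (x t) (hxA t ht)) (hx t ht) (hz t ht)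
  exact ⟨he_deriv, fun t ht => D.eq_exp_smul_mulVec_of_hasDerivAt he_deriv ht⟩

/-- **Observer error dynamics.** If `T` satisfies the observer PDE
`(∂T/∂x)(x) f(x) = D T(x) + F h(x)` on a set `A`, `x` solves `ẋ = f(x)` staying in `A`,
and `z` solves `ż = D z + F h(x(t))`, then the error `e = z - T ∘ x` satisfies
`ė = D e` and hence `e(t) = exp(t D) e(0)` for all `t ≥ 0`. -/
theorem observer_error_linear_ode
    (dx dy dz : ℕ)
    (f : (Fin dx → ℝ) → Fin dx → ℝ) (h : (Fin dx → ℝ) → Fin dy → ℝ)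
    (hf : Continuous f) (hh : Continuous h)
    (D : Matrix (Fin dz) (Fin dz) ℝ) (F : Matrix (Fin dz) (Fin dy) ℝ)
    (A : Set (Fin dx → ℝ))
    (T : (Fin dx → ℝ) → Fin dz → ℝ) (hT : Differentiable ℝ T)
    (hPDE : ∀ x ∈ A, fderiv ℝ T x (f x) = D.mulVec (T x) + F.mulVec (h x))
    (x : ℝ → Fin dx → ℝ) (hx : ∀ t : ℝ, 0 ≤ t → HasDerivAt x (f (x t)) t)
    (hxA : ∀ t : ℝ, 0 ≤ t → x t ∈ A)
    (z : ℝ → Fin dz → ℝ)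
    (hz : ∀ t : ℝ, 0 ≤ t → HasDerivAt z (D.mulVec (z t) + F.mulVec (h (x t))) t)
    (e : ℝ → Fin dz → ℝ) (he : ∀ t, e t = z t - T (x t)) :
    (∀ t : ℝ, 0 ≤ t → HasDerivAt e (D.mulVec (e t)) t) ∧
    (∀ t : ℝ, 0 ≤ t → e t = (NormedSpace.exp (t • D)).mulVec (e 0)) :=
  observer_error_linear_ode_general dx dy dz f h D F A T hT hPDE x hx hxA z hz e he
end

section
/- Let f : ℝ^{d_x} → ℝ^{d_x} and h : ℝ^{d_x} → ℝ^{d_y} be continuous, let D be a real d_z × d_z matrix that is diagonalizable over ℂ with all complex eigenvalues λ₁, …, λ_{d_z} having negative real part, let F be a real d_z × d_y matrix, and let A ⊆ ℝ^{d_x}. Suppose T : ℝ^{d_x} → ℝ^{d_z} is differentiable and satisfies, for every x ∈ A, that the derivative of T at x applied to f(x) equals D T(x) + F h(x). Let x : [0, ∞) → ℝ^{d_x} be differentiable with ẋ(t) = f(x(t)) and x(t) ∈ A for all t ≥ 0, and let z : [0, ∞) → ℝ^{d_z} be differentiable with ż(t) = D z(t) + F h(x(t)) for all t ≥ 0. Then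 there exists M > 0 such that for all t ≥ 0, ‖z(t) − T(x(t))‖ ≤ M ‖z(0) − T(x(0))‖ e^{−λ_min t}, where λ_min = min_i |Re λ_i|. -/
open Matrix

/-- The Euclidean norm on `Fin n → ℝ`. -/
noncomputable def euclNorm {n : ℕ} (v : Fin n → ℝ) : ℝ :=
  ‖(WithLp.equiv 2 (Fin n → ℝ)).symm v‖

/-! The error `e = z - T ∘ x` solves the linear ODE `ė = D e`, because the observer PDE makes the
forcing terms `F h(x)` cancel; hence `e(t) = exp(t D) e(0)`. Writing `D = P diag(d) P⁻¹` over `ℂ`,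
`exp(t D) = P diag(exp(t dᵢ)) P⁻¹`, and each `dᵢ`, being a root of the characteristic polynomial,
is some `λⱼ`, so `|exp(t dᵢ)| ≤ exp(-λ_min t)`. The constant `M` is `‖P‖ ‖P⁻¹‖`, up to the factor
`√d_z` comparing the Euclidean norm with the sup norm in which the operator norm is taken. -/

open NormedSpace Polynomial

theorem euclNorm_eq_sqrt {n : ℕ} (v : Fin n → ℝ) : euclNorm v = √(∑ i, v i ^ 2) := by
  simp [euclNorm, EuclideanSpace.norm_eq]

theorem norm_le_euclNorm {n : ℕ} (v : Fin n → ℝ) : ‖v‖ ≤ euclNorm v := by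
  refine (pi_norm_le_iff_of_nonneg (by rw [euclNorm_eq_sqrt]; positivity)).mpr fun i => ?_
  rw [euclNorm_eq_sqrt, Real.norm_eq_abs, ← Real.sqrt_sq_eq_abs]
  exact Real.sqrt_le_sqrt (Finset.single_le_sum (fun j _ => sq_nonneg (v j)) (Finset.mem_univ i))

theorem euclNorm_le_sqrt_mul_norm {n : ℕ} (v : Fin n → ℝ) : euclNorm v ≤ √n * ‖v‖ := by
  have hsum : ∑ i, v i ^ 2 ≤ n * ‖v‖ ^ 2 := by
    calc ∑ i, v i ^ 2 ≤ ∑ _i : Fin n, ‖v‖ ^ 2 := by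
          refine Finset.sum_le_sum fun i _ => ?_
          simpa [sq_abs] using pow_le_pow_left₀ (norm_nonneg _) (norm_le_pi_norm v i) 2
      _ = n * ‖v‖ ^ 2 := by simp
  calc euclNorm v ≤ √(n * ‖v‖ ^ 2) := by rw [euclNorm_eq_sqrt]; exact Real.sqrt_le_sqrt hsum
    _ = √n * ‖v‖ := by rw [Real.sqrt_mul n.cast_nonneg, Real.sqrt_sq (norm_nonneg v)]

theorem Polynomial.exists_eq_of_prod_X_sub_C_eq {R ι κ : Type*} [CommRing R] [IsDomain R]
    [Fintype ι] [Fintype κ] {a : ι → R} {b : κ → R}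
    (h : ∏ i, (X - C (a i)) = ∏ j, (X - C (b j))) (i : ι) : ∃ j, a i = b j := by
  have hroot : eval (a i) (∏ j, (X - C (b j))) = 0 := by
    rw [← h, eval_prod]
    exact Finset.prod_eq_zero (Finset.mem_univ i) (by simp)
  simpa [eval_prod, Finset.prod_eq_zero_iff, sub_eq_zero] using hroot

theorem Matrix.exists_eq_of_charpoly_eq_prod_of_eq_conj_diagonal {R ι : Type*} [CommRing R]
    [IsDomain R] [Fintype ι] [DecidableEq ι] {A P : Matrix ι ι R} {d lam : ι → R}
    (hA : A.charpoly = ∏ i, (X - C (lam i))) (hP : IsUnit P) (hAP : A = P * diagonal d * P⁻¹)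
    (i : ι) : ∃ j, d i = lam j := by
  refine exists_eq_of_prod_X_sub_C_eq ?_ i
  obtain ⟨u, rfl⟩ := hP
  rw [← charpoly_diagonal, ← hA, hAP, charpoly_units_conj]

theorem hasDerivAt_observer_error {E ι : Type*} [NormedAddCommGroup E] [NormedSpace ℝ E]
    [Fintype ι] {f : E → E} {T : E → ι → ℝ} {D : Matrix ι ι ℝ} {u : ι → ℝ} {x : ℝ → E}
    {z : ℝ → ι → ℝ} {t : ℝ} (hT : DifferentiableAt ℝ T (x t))
    (hPDE : fderiv ℝ T (x t) (f (x t)) = D *ᵥ T (x t) + u) (hx : HasDerivAt x (f (x t)) t)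
    (hz : HasDerivAt z (D *ᵥ z t + u) t) :
    HasDerivAt (fun s => z s - T (x s)) (D *ᵥ (z t - T (x t))) t := by
  have hTx := hT.hasFDerivAt.comp_hasDerivAt t hx
  rw [hPDE] at hTx
  have hcancel : D *ᵥ (z t - T (x t)) = (D *ᵥ z t + u) - (D *ᵥ T (x t) + u) := by
    rw [mulVec_sub, add_sub_add_right_eq_sub]
  exact hcancel ▸ hz.sub hTx

section LinftyOpNorm

attribute [local instance] Matrix.linftyOpNormedAddCommGroup Matrix.linftyOpNormedRing
  Matrix.linftyOpNormedAlgebra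

variable {ι : Type*} [Fintype ι]

theorem Matrix.linfty_opNorm_map_ofReal (A : Matrix ι ι ℝ) :
    ‖A.map Complex.ofReal‖ = ‖A‖ := by
  simp [linfty_opNorm_def]

variable [DecidableEq ι]

theorem Matrix.exp_map_ofReal (A : Matrix ι ι ℝ) :
    exp (A.map Complex.ofReal) = (exp A).map Complex.ofReal :=
  (map_exp (Complex.ofRealHom.mapMatrix : Matrix ι ι ℝ →+* Matrix ι ι ℂ)
    (continuous_id.matrix_map Complex.continuous_ofReal) A).symm

theorem Matrix.norm_exp_smul_conj_diagonal_le {P : Matrix ι ι ℂ} (hP : IsUnit P) {d : ι → ℂ}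
    {a t : ℝ} (hd : ∀ i, (d i).re ≤ -a) (ht : 0 ≤ t) :
    ‖exp (t • (P * diagonal d * P⁻¹))‖ ≤ ‖P‖ * ‖P⁻¹‖ * Real.exp (-a * t) := by
  have hdiag : ‖exp (t • diagonal d)‖ ≤ Real.exp (-a * t) := by
    rw [← diagonal_smul, exp_diagonal, linfty_opNorm_diagonal]
    refine (pi_norm_le_iff_of_nonneg (Real.exp_pos _).le).mpr fun i => ?_
    rw [Pi.coe_exp, ← Complex.exp_eq_exp_ℂ, Pi.smul_apply, Complex.norm_exp, Complex.smul_re]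
    exact Real.exp_le_exp.mpr (by rw [smul_eq_mul]; nlinarith [hd i])
  have hsmul : t • (P * diagonal d * P⁻¹) = P * (t • diagonal d) * P⁻¹ := by
    simp only [smul_mul_assoc, mul_smul_comm]
  rw [hsmul, exp_conj _ _ hP]
  calc ‖P * exp (t • diagonal d) * P⁻¹‖ ≤ ‖P‖ * ‖exp (t • diagonal d)‖ * ‖P⁻¹‖ :=
        (norm_mul_le _ _).trans (by gcongr; exact norm_mul_le _ _)
    _ ≤ ‖P‖ * Real.exp (-a * t) * ‖P⁻¹‖ := by gcongr
    _ = ‖P‖ * ‖P⁻¹‖ * Real.exp (-a * t) := by ring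

theorem Matrix.norm_exp_smul_le_of_map_ofReal_eq_conj_diagonal {D : Matrix ι ι ℝ}
    {P : Matrix ι ι ℂ} (hP : IsUnit P) {d : ι → ℂ}
    (hD : D.map Complex.ofReal = P * diagonal d * P⁻¹)
    {a t : ℝ} (hd : ∀ i, (d i).re ≤ -a) (ht : 0 ≤ t) :
    ‖exp (t • D)‖ ≤ ‖P‖ * ‖P⁻¹‖ * Real.exp (-a * t) := by
  have hmap : (t • D).map Complex.ofReal = t • D.map Complex.ofReal := by
    ext i j; simp [Complex.real_smul]
  rw [← linfty_opNorm_map_ofReal, ← exp_map_ofReal, hmap, hD]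
  exact norm_exp_smul_conj_diagonal_le hP hd ht

theorem Matrix.hasDerivAt_exp_smul_mulVec_s4 (A : Matrix ι ι ℝ) (v : ι → ℝ) (t : ℝ) :
    HasDerivAt (fun s : ℝ => exp (s • A) *ᵥ v) (A *ᵥ (exp (t • A) *ᵥ v)) t := by
  let L : Matrix ι ι ℝ →L[ℝ] ι → ℝ := LinearMap.toContinuousLinearMap ((mulVecBilin ℝ ℝ).flip v)
  exact (L.hasFDerivAt.comp_hasDerivAt t (hasDerivAt_exp_smul_const' A t)).congr_deriv
    (mulVec_mulVec _ _ _).symm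

theorem Matrix.eq_exp_smul_mulVec_of_hasDerivAt_s4 (A : Matrix ι ι ℝ) {e : ℝ → ι → ℝ}
    (he : ∀ t, 0 ≤ t → HasDerivAt e (A *ᵥ e t) t) {t : ℝ} (ht : 0 ≤ t) :
    e t = exp (t • A) *ᵥ e 0 := by
  have hlip : LipschitzWith _ (A *ᵥ ·) := (LinearMap.toContinuousLinearMap (toLin' A)).lipschitz
  refine ODE_solution_unique (v := fun _ => (A *ᵥ ·)) (fun _ => hlip)
    (fun s hs => (he s hs.1).continuousAt.continuousWithinAt)
    (fun s hs => (he s hs.1).hasDerivWithinAt)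
    (fun s _ => (hasDerivAt_exp_smul_mulVec_s4 A _ s).continuousAt.continuousWithinAt)
    (fun s _ => (hasDerivAt_exp_smul_mulVec_s4 A _ s).hasDerivWithinAt)
    (by simp) ⟨ht, le_rfl⟩

theorem Matrix.exists_pos_euclNorm_exp_smul_mulVec_le {n : ℕ} {D : Matrix (Fin n) (Fin n) ℝ}
    {P : Matrix (Fin n) (Fin n) ℂ} (hP : IsUnit P) {d : Fin n → ℂ}
    (hD : D.map Complex.ofReal = P * diagonal d * P⁻¹) {a : ℝ} (hd : ∀ i, (d i).re ≤ -a) :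
    ∃ M : ℝ, 0 < M ∧ ∀ t : ℝ, 0 ≤ t → ∀ v : Fin n → ℝ,
      euclNorm (exp (t • D) *ᵥ v) ≤ M * euclNorm v * Real.exp (-a * t) := by
  refine ⟨√n * (‖P‖ * ‖P⁻¹‖) + 1, by positivity, fun t ht v => ?_⟩
  have hv : 0 ≤ euclNorm v := (norm_nonneg v).trans (norm_le_euclNorm v)
  calc euclNorm (exp (t • D) *ᵥ v) ≤ √n * ‖exp (t • D) *ᵥ v‖ := euclNorm_le_sqrt_mul_norm _
    _ ≤ √n * (‖P‖ * ‖P⁻¹‖ * Real.exp (-a * t) * euclNorm v) := by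
        gcongr
        exact (linfty_opNorm_mulVec _ _).trans <| mul_le_mul
          (norm_exp_smul_le_of_map_ofReal_eq_conj_diagonal hP hD hd ht) (norm_le_euclNorm v)
          (norm_nonneg v) (by positivity)
    _ ≤ (√n * (‖P‖ * ‖P⁻¹‖) + 1) * euclNorm v * Real.exp (-a * t) := by
        nlinarith [mul_nonneg hv (Real.exp_pos (-a * t)).le]

end LinftyOpNorm

theorem observer_error_exponential_decay_general
    (dx dy dz : ℕ)
    (f : (Fin dx → ℝ) → Fin dx → ℝ) (h : (Fin dx → ℝ) → Fin dy → ℝ)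
    (D : Matrix (Fin dz) (Fin dz) ℝ) (lam : Fin dz → ℂ)
    (hlam : (D.map Complex.ofReal).charpoly = ∏ i, (Polynomial.X - Polynomial.C (lam i)))
    (hdiag : ∃ (P : Matrix (Fin dz) (Fin dz) ℂ) (d : Fin dz → ℂ),
        IsUnit P ∧ D.map Complex.ofReal = P * Matrix.diagonal d * P⁻¹)
    (hneg : ∀ i, (lam i).re < 0)
    (F : Matrix (Fin dz) (Fin dy) ℝ)
    (A : Set (Fin dx → ℝ))
    (T : (Fin dx → ℝ) → Fin dz → ℝ) (hT : Differentiable ℝ T)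
    (hPDE : ∀ x ∈ A, fderiv ℝ T x (f x) = D.mulVec (T x) + F.mulVec (h x))
    (x : ℝ → Fin dx → ℝ) (hx : ∀ t : ℝ, 0 ≤ t → HasDerivAt x (f (x t)) t)
    (hxA : ∀ t : ℝ, 0 ≤ t → x t ∈ A)
    (z : ℝ → Fin dz → ℝ)
    (hz : ∀ t : ℝ, 0 ≤ t → HasDerivAt z (D.mulVec (z t) + F.mulVec (h (x t))) t) :
    ∃ M : ℝ, 0 < M ∧ ∀ t : ℝ, 0 ≤ t →
      euclNorm (z t - T (x t)) ≤
        M * euclNorm (z 0 - T (x 0)) * Real.exp (-(⨅ i, |(lam i).re|) * t) := by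
  obtain ⟨P, d, hP, hPD⟩ := hdiag
  have hd : ∀ i, (d i).re ≤ -⨅ j, |(lam j).re| := fun i => by
    obtain ⟨j, hj⟩ := exists_eq_of_charpoly_eq_prod_of_eq_conj_diagonal hlam hP hPD i
    have hmin : ⨅ k, |(lam k).re| ≤ |(lam j).re| := ciInf_le (Set.finite_range _).bddBelow j
    rw [hj]
    linarith [abs_of_neg (hneg j)]
  obtain ⟨M, hM, hexp⟩ := exists_pos_euclNorm_exp_smul_mulVec_le hP hPD hd
  have he (t : ℝ) (ht : 0 ≤ t) :
      HasDerivAt (fun s => z s - T (x s)) (D *ᵥ (z t - T (x t))) t :=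
    hasDerivAt_observer_error (hT _) (hPDE _ (hxA t ht)) (hx t ht) (hz t ht)
  refine ⟨M, hM, fun t ht => ?_⟩
  rw [D.eq_exp_smul_mulVec_of_hasDerivAt_s4 he ht]
  exact hexp t ht _

/-- **Exponential convergence of the KKL observer in the transformed coordinates.**
If `T` satisfies the observer PDE on `A`, `D` is diagonalizable over `ℂ` with complex
eigenvalues `λ₁, …, λ_{d_z}` all of negative real part, `x` solves `ẋ = f(x)` staying in
`A` and `z` solves `ż = D z + F h(x(t))`, then
`‖z(t) - T(x(t))‖ ≤ M ‖z(0) - T(x(0))‖ e^{-λ_min t}` for some `M > 0`, where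
`λ_min = min_i |Re λ_i|`. -/
theorem observer_error_exponential_decay
    (dx dy dz : ℕ)
    (f : (Fin dx → ℝ) → Fin dx → ℝ) (h : (Fin dx → ℝ) → Fin dy → ℝ)
    (hf : Continuous f) (hh : Continuous h)
    (D : Matrix (Fin dz) (Fin dz) ℝ) (lam : Fin dz → ℂ)
    (hlam : (D.map Complex.ofReal).charpoly = ∏ i, (Polynomial.X - Polynomial.C (lam i)))
    (hdiag : ∃ (P : Matrix (Fin dz) (Fin dz) ℂ) (d : Fin dz → ℂ),
        IsUnit P ∧ D.map Complex.ofReal = P * Matrix.diagonal d * P⁻¹)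
    (hneg : ∀ i, (lam i).re < 0)
    (F : Matrix (Fin dz) (Fin dy) ℝ)
    (A : Set (Fin dx → ℝ))
    (T : (Fin dx → ℝ) → Fin dz → ℝ) (hT : Differentiable ℝ T)
    (hPDE : ∀ x ∈ A, fderiv ℝ T x (f x) = D.mulVec (T x) + F.mulVec (h x))
    (x : ℝ → Fin dx → ℝ) (hx : ∀ t : ℝ, 0 ≤ t → HasDerivAt x (f (x t)) t)
    (hxA : ∀ t : ℝ, 0 ≤ t → x t ∈ A)
    (z : ℝ → Fin dz → ℝ)
    (hz : ∀ t : ℝ, 0 ≤ t → HasDerivAt z (D.mulVec (z t) + F.mulVec (h (x t))) t) :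
    ∃ M : ℝ, 0 < M ∧ ∀ t : ℝ, 0 ≤ t →
      euclNorm (z t - T (x t)) ≤
        M * euclNorm (z 0 - T (x 0)) * Real.exp (-(⨅ i, |(lam i).re|) * t) :=
  observer_error_exponential_decay_general dx dy dz f h D lam hlam hdiag hneg F A T hT hPDE x hx hxA
    z hz
end
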